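/- arXiv:1810.08231 — 3 statements merged into one kernel-verified Lean document; each statement's English description precedes it below -/
import Mathlib

section
/- The function F: ℝ² → ℝ defined by F(x,y) = (1/9)x⁴ + 9y⁴ + 4x²y² + (4/9)x³y, restricted to the unit circle x² + y² = 1, attains its maximum value 9 exactly at the two points (0,1) and (0,-1). -/
/-!
Homogenising with `x² + y² = 1` turns `9 - F` into the quartic form
`9 (x² + y²)² - F = x² (78 x² + 124 y² + 2 (x - y)²) / 9`, so on the circle
`9 - F ≥ 78 x² / 9 ≥ 0`, with equality only when `x = 0`.
-/

noncomputable def quarticF (x y : ℝ) : ℝ :=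
  (1/9) * x^4 + 9 * y^4 + 4 * x^2 * y^2 + (4/9) * x^3 * y

theorem nine_mul_sq_sub_quarticF (x y : ℝ) :
    9 * (x^2 + y^2)^2 - quarticF x y = x^2 * (78 * x^2 + 124 * y^2 + 2 * (x - y)^2) / 9 := by
  unfold quarticF
  ring

theorem quarticF_add_le_of_sq_add_sq_eq_one {x y : ℝ} (h : x^2 + y^2 = 1) :
    quarticF x y + 26/3 * x^2 ≤ 9 := by
  have key := nine_mul_sq_sub_quarticF x y
  rw [h] at key
  nlinarith [mul_nonneg (sq_nonneg x) (sq_nonneg y), mul_nonneg (sq_nonneg x) (sq_nonneg (x - y))]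

theorem quarticF_le_nine_of_sq_add_sq_eq_one {x y : ℝ} (h : x^2 + y^2 = 1) :
    quarticF x y ≤ 9 := by
  linarith [quarticF_add_le_of_sq_add_sq_eq_one h, sq_nonneg x]

theorem quarticF_eq_nine_iff {x y : ℝ} (h : x^2 + y^2 = 1) :
    quarticF x y = 9 ↔ (x = 0 ∧ y = 1) ∨ (x = 0 ∧ y = -1) := by
  constructor
  · intro heq
    have hx : x = 0 := by
      have := quarticF_add_le_of_sq_add_sq_eq_one h
      exact pow_eq_zero_iff two_ne_zero |>.mp (le_antisymm (by linarith) (sq_nonneg x))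
    subst hx
    have hy : y^2 = 1^2 := by linarith
    rcases sq_eq_sq_iff_eq_or_eq_neg.mp hy with hy | hy <;> simp [hy]
  · rintro (⟨rfl, rfl⟩ | ⟨rfl, rfl⟩) <;> norm_num [quarticF]

/-- on the unit circle, F(x,y) = x⁴/9 + 9y⁴ + 4x²y² + (4/9)x³y attains its
maximum value 9 exactly at (0,1) and (0,-1). -/
theorem F_max_on_circle :
    ∀ x y : ℝ, x^2 + y^2 = 1 →
      ((1/9) * x^4 + 9 * y^4 + 4 * x^2 * y^2 + (4/9) * x^3 * y ≤ 9 ∧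
       ((1/9) * x^4 + 9 * y^4 + 4 * x^2 * y^2 + (4/9) * x^3 * y = 9 ↔
         (x = 0 ∧ y = 1) ∨ (x = 0 ∧ y = -1))) :=
  fun _ _ h => ⟨quarticF_le_nine_of_sq_add_sq_eq_one h, quarticF_eq_nine_iff h⟩
end

section
/- Under the additional assumption a < (1-δ₁)(1 - 1/q)γ for some δ₁ > 0, if G(0) > γ then there exists δ₂ > 0 depending only on δ₁ (and q) such that G(t) > (1+δ₂)γ for all t ∈ I. -/
/-! On the band `γ ≤ r ≤ (1 + δ₂)γ` the function `f(r) = a - r + b r^q` is negative: writing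
`r = sγ`, the choice of `γ` gives `f(sγ) = a - γ (s - s^q/q)`, and `s - s^q/q` stays above
`(1 - δ₁)(1 - 1/q)` for `s` close to its maximiser `1`. Since `f ∘ G ≥ 0`, the continuous
function `G` never enters the band, so starting above `γ` it stays above `(1 + δ₂)γ`. -/

open Set Filter Topology

theorem IsPreconnected.forall_lt_of_forall_notMem_Icc {I : Set ℝ} {G : ℝ → ℝ} {lo hi x : ℝ}
    (hI : IsPreconnected I) (hG : ContinuousOn G I) (hlohi : lo ≤ hi)
    (hgap : ∀ t ∈ I, G t ∉ Icc lo hi) (hx : x ∈ I) (hGx : lo ≤ G x) :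
    ∀ t ∈ I, hi < G t := by
  have hGx' : hi < G x := by
    by_contra h
    exact hgap x hx ⟨hGx, not_lt.1 h⟩
  intro t ht
  by_contra h
  have hGt : G t < lo := by
    by_contra h'
    exact hgap t ht ⟨not_lt.1 h', not_lt.1 h⟩
  obtain ⟨c, hc, hGc⟩ := hI.intermediate_value ht hx hG ⟨hGt.le, hlohi.trans hGx'.le⟩
  exact hgap c hc (by rw [hGc]; exact ⟨le_rfl, hlohi⟩)

theorem exists_pos_forall_Icc_lt_sub_rpow_div {q c : ℝ} (hc : c < 1 - 1 / q) :
    ∃ δ > 0, ∀ s ∈ Icc 1 (1 + δ), c < s - s ^ q / q := by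
  have hcont : ContinuousAt (fun s : ℝ => s - s ^ q / q) 1 :=
    continuousAt_id.sub ((Real.continuousAt_rpow_const 1 q (Or.inl one_ne_zero)).div_const q)
  have hev : ∀ᶠ s in 𝓝 (1 : ℝ), c < s - s ^ q / q :=
    hcont.eventually (lt_mem_nhds (by simpa using hc))
  obtain ⟨ε, hε, hball⟩ := Metric.eventually_nhds_iff.1 hev
  refine ⟨ε / 2, half_pos hε, fun s hs => hball ?_⟩
  rw [Real.dist_eq, abs_lt]
  constructor <;> linarith [hs.1, hs.2]

theorem mul_rpow_eq_div_of_eq_rpow {b q γ : ℝ} (hb : 0 < b) (hq : 1 < q)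
    (hγ : γ = (b * q) ^ (-(1 / (q - 1)))) : b * γ ^ q = γ / q := by
  have hbq : 0 < b * q := mul_pos hb (by linarith)
  have hγ0 : 0 < γ := hγ ▸ Real.rpow_pos_of_pos hbq _
  have hγq : γ ^ (q - 1) = (b * q)⁻¹ := by
    rw [hγ, ← Real.rpow_mul hbq.le, ← Real.rpow_neg_one]
    congr 1
    field_simp [(sub_pos.2 hq).ne']
  calc b * γ ^ q = b * (γ ^ (q - 1) * γ) := by
        rw [← Real.rpow_add_one hγ0.ne', sub_add_cancel]
    _ = γ / q := by
        rw [hγq]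
        field_simp

theorem sub_add_mul_rpow_eq_sub_mul {a b q γ s : ℝ} (hb : 0 < b) (hq : 1 < q)
    (hγ : γ = (b * q) ^ (-(1 / (q - 1)))) (hs : 0 ≤ s) :
    a - s * γ + b * (s * γ) ^ q = a - γ * (s - s ^ q / q) := by
  have hγ0 : 0 ≤ γ := hγ ▸ Real.rpow_nonneg (mul_pos hb (by linarith)).le _
  rw [Real.mul_rpow hs hγ0, mul_left_comm, mul_rpow_eq_div_of_eq_rpow hb hq hγ]
  ring

/-- quantitative trapping: if a < (1-δ₁)(1-1/q)γ and G(0) > γ, then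
G(t) > (1+δ₂)γ on I, where δ₂ > 0 depends only on δ₁ (and q). -/
theorem trapping_lemma_quantitative (q δ₁ : ℝ) (hq : 1 < q) (hδ₁ : 0 < δ₁) :
    ∃ δ₂ : ℝ, 0 < δ₂ ∧
      ∀ (I : Set ℝ) (p r a b γ : ℝ) (G : ℝ → ℝ),
        I = Set.Ioo p r → (0 : ℝ) ∈ I → 0 < b →
        γ = (b * q) ^ (-(1 / (q - 1))) →
        ContinuousOn G I → (∀ t ∈ I, 0 ≤ G t) →
        (∀ t ∈ I, 0 ≤ a - G t + b * (G t) ^ q) →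
        a < (1 - δ₁) * ((1 - 1/q) * γ) → G 0 > γ →
        ∀ t ∈ I, G t > (1 + δ₂) * γ := by
  have hmax : 0 < 1 - 1 / q := by
    rw [sub_pos, div_lt_one (by linarith)]
    exact hq
  obtain ⟨δ₂, hδ₂, hφ⟩ :=
    exists_pos_forall_Icc_lt_sub_rpow_div (q := q) (c := (1 - δ₁) * (1 - 1 / q)) (by nlinarith)
  refine ⟨δ₂, hδ₂, ?_⟩
  rintro I p r a b γ G rfl h0 hb hγ hG - hf ha hG0
  have hγ0 : 0 < γ := hγ ▸ Real.rpow_pos_of_pos (mul_pos hb (by linarith)) _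
  refine isPreconnected_Ioo.forall_lt_of_forall_notMem_Icc hG (by nlinarith)
    (fun t ht hband => ?_) h0 hG0.le
  set s := G t / γ
  have hGt : G t = s * γ := (div_mul_cancel₀ _ hγ0.ne').symm
  have hs : s ∈ Icc 1 (1 + δ₂) :=
    ⟨(le_div_iff₀ hγ0).2 (by linarith [hband.1]), (div_le_iff₀ hγ0).2 hband.2⟩
  have hfG := hf t ht
  rw [hGt, sub_add_mul_rpow_eq_sub_mul hb hq hγ (by linarith [hs.1])] at hfG
  nlinarith [mul_lt_mul_of_pos_left (hφ s hs) hγ0]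
end

section
/- (Explicit blow-up by pseudo-conformal transformation, n = 2.) Let σ = 3, μ = 9, and suppose (P,Q) ∈ H¹(ℝ²)² is a real solution of ΔP - P + (P²/9+2Q²)P + P²Q/3 = 0, ΔQ - 9Q + (9Q²+2P²)Q + P³/9 = 0 (i.e., the system with ω = 0). Then the pair û(x,t) = (1-t)^{-1} e^{-i|x|²/(4(1-t))} e^{it/(1-t)} P(x/(1-t)), ŵ(x,t) = (1-t)^{-1} e^{-3i|x|²/(4(1-t))} e^{3it/(1-t)} Q(x/(1-t)) solves, for t < 1, the system i u_t + Δu + (|u|²/9 + 2|w|²)u + (1/3)ū²w = 0, 3i w_t + Δw + (9|w|² + 2|u|²)w + (1/9)u³ = 0, and satisfies M(û(0), ŵ(0)) = M(P,Q), where M(u,w) = ∫(|u|² + 9|w|²). -/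
set_option maxHeartbeats 1600000

open MeasureTheory

/-- Laplacian (sum of second partial derivatives) of a complex-valued function on ℝ². -/
noncomputable def lapC (f : EuclideanSpace ℝ (Fin 2) → ℂ)
    (x : EuclideanSpace ℝ (Fin 2)) : ℂ :=
  ∑ i : Fin 2, iteratedFDeriv ℝ 2 f x ![EuclideanSpace.single i 1, EuclideanSpace.single i 1]

noncomputable section PCAux
open Complex

abbrev E₂ : Type := EuclideanSpace ℝ (Fin 2)

def ee (i : Fin 2) : E₂ := EuclideanSpace.single i 1

def gfun (f : E₂ → ℝ) (a : ℂ) (l : ℝ) : E₂ → ℂ :=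
  fun y => cexp (a * ((‖y‖^2 : ℝ) : ℂ)) * ((f (l • y) : ℝ) : ℂ)

def vfun (f : E₂ → ℝ) (c : ℝ) (τ : ℝ) (y : E₂) : ℂ :=
  (((1 - τ)⁻¹ : ℝ) : ℂ)
    * cexp (-((c : ℂ) * I * ((‖y‖^2 : ℝ) : ℂ)) / (4 * (((1 - τ) : ℝ) : ℂ)))
    * cexp ((c : ℂ) * I * (τ : ℂ) / (((1 - τ) : ℝ) : ℂ))
    * ((f ((1 - τ)⁻¹ • y) : ℝ) : ℂ)

lemma inner_ee (x : E₂) (i : Fin 2) : (inner ℝ x (ee i) : ℝ) = x i := by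
  simp [ee, EuclideanSpace.inner_single_right]

lemma decomp (x : E₂) : x = x 0 • ee 0 + x 1 • ee 1 := by
  ext j; fin_cases j <;> simp [ee, EuclideanSpace.single_apply]

lemma normsq (x : E₂) : ‖x‖^2 = (x 0)^2 + (x 1)^2 := by
  have h : ‖x‖^2 = inner ℝ x x := (real_inner_self_eq_norm_sq x).symm
  rw [h, PiLp.inner_apply]
  simp [Fin.sum_univ_two, RCLike.inner_apply]

lemma gfun_smooth {f : E₂ → ℝ} (hf : ContDiff ℝ (⊤ : ℕ∞) f) (a : ℂ) (l : ℝ) :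
    ContDiff ℝ (⊤ : ℕ∞) (gfun f a l) := by
  apply ContDiff.mul
  · exact Complex.contDiff_exp.comp (contDiff_const.mul (Complex.ofRealCLM.contDiff.comp
      (contDiff_id.norm_sq (𝕜 := ℝ))))
  · exact Complex.ofRealCLM.contDiff.comp (hf.comp (contDiff_id.const_smul l))

lemma exp_part_hasFDerivAt (a : ℂ) (y : E₂) :
    HasFDerivAt (fun z : E₂ => cexp (a * ((‖z‖^2 : ℝ) : ℂ)))
      (cexp (a * ((‖y‖^2 : ℝ) : ℂ)) • (a • (Complex.ofRealCLM.comp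
        ((2 : ℕ) • (innerSL ℝ y))))) y := by
  have h1 : HasFDerivAt (fun z : E₂ => ‖z‖^2) ((2 : ℕ) • (innerSL ℝ y)) y := by
    have := (hasFDerivAt_id y).norm_sq
    simpa using this
  have h2 := (Complex.ofRealCLM.hasFDerivAt.comp y h1)
  exact (h2.const_mul a).cexp

lemma comp_part_hasFDerivAt {f : E₂ → ℝ} (hf : ContDiff ℝ (⊤ : ℕ∞) f) (l : ℝ) (y : E₂) :
    HasFDerivAt (fun z : E₂ => ((f (l • z) : ℝ) : ℂ))
      (Complex.ofRealCLM.comp ((fderiv ℝ f (l • y)).comp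
        (l • ContinuousLinearMap.id ℝ E₂))) y := by
  have hc : HasFDerivAt (fun z : E₂ => l • z) (l • ContinuousLinearMap.id ℝ E₂) y :=
    (hasFDerivAt_id y).const_smul l
  exact Complex.ofRealCLM.hasFDerivAt.comp y
    (((hf.differentiable (by simp) (l • y)).hasFDerivAt).comp y hc)

lemma gfun_fderiv_apply {f : E₂ → ℝ} (hf : ContDiff ℝ (⊤ : ℕ∞) f) (a : ℂ) (l : ℝ) (y v : E₂) :
    fderiv ℝ (gfun f a l) y v =
      cexp (a * ((‖y‖^2 : ℝ) : ℂ)) *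
        (2 * a * ((inner ℝ y v : ℝ) : ℂ) * ((f (l • y) : ℝ) : ℂ)
          + ((fderiv ℝ f (l • y) (l • v) : ℝ) : ℂ)) := by
  have h := ((exp_part_hasFDerivAt a y).mul (comp_part_hasFDerivAt hf l y)).fderiv
  simp only [Pi.mul_def] at h
  rw [show gfun f a l = fun z => cexp (a * ((‖z‖^2 : ℝ) : ℂ)) * ((f (l • z) : ℝ) : ℂ) from rfl, h]
  simp [ContinuousLinearMap.smul_apply, ContinuousLinearMap.comp_apply,
    ContinuousLinearMap.add_apply, smul_eq_mul]
  ring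

lemma gfun_fderiv2_apply {f : E₂ → ℝ} (hf : ContDiff ℝ (⊤ : ℕ∞) f) (a : ℂ) (l : ℝ) (x : E₂) (i : Fin 2) :
    fderiv ℝ (fun y => fderiv ℝ (gfun f a l) y (ee i)) x (ee i) =
      cexp (a * ((‖x‖^2 : ℝ) : ℂ)) *
        (4 * a^2 * ((x i : ℝ) : ℂ)^2 * ((f (l • x) : ℝ) : ℂ)
          + 2 * a * ((f (l • x) : ℝ) : ℂ)
          + 4 * a * (l : ℂ) * ((x i : ℝ) : ℂ) * ((fderiv ℝ f (l • x) (ee i) : ℝ) : ℂ)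
          + (l : ℂ)^2 * ((fderiv ℝ (fderiv ℝ f) (l • x) (ee i) (ee i) : ℝ) : ℂ)) := by
  have hfun : (fun y => fderiv ℝ (gfun f a l) y (ee i)) =
      (fun y => cexp (a * ((‖y‖^2 : ℝ) : ℂ)) *
        (2 * a * ((y i : ℝ) : ℂ) * ((f (l • y) : ℝ) : ℂ)
          + ((fderiv ℝ f (l • y) (l • ee i) : ℝ) : ℂ))) := by
    funext y
    rw [gfun_fderiv_apply hf a l y (ee i), inner_ee]
  rw [hfun]
  have hproj : ∀ y : E₂, HasFDerivAt (fun z : E₂ => ((z i : ℝ) : ℂ))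
      (Complex.ofRealCLM.comp (EuclideanSpace.proj (𝕜 := ℝ) i)) y := fun y =>
    (Complex.ofRealCLM.comp (EuclideanSpace.proj (𝕜 := ℝ) i)).hasFDerivAt
  have hB1 : HasFDerivAt (fun y : E₂ => 2 * a * ((y i : ℝ) : ℂ) * ((f (l • y) : ℝ) : ℂ))
      ((2 * a * ((x i : ℝ) : ℂ)) • (Complex.ofRealCLM.comp ((fderiv ℝ f (l • x)).comp
        (l • ContinuousLinearMap.id ℝ E₂)))
       + ((f (l • x) : ℝ) : ℂ) • ((2 * a) • (Complex.ofRealCLM.comp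
          (EuclideanSpace.proj (𝕜 := ℝ) i)))) x := by
    exact (((hproj x).const_mul (2*a)).mul (comp_part_hasFDerivAt hf l x))
  have hdf : HasFDerivAt (fderiv ℝ f) (fderiv ℝ (fderiv ℝ f) (l • x)) (l • x) :=
    (((hf.fderiv_right (m := 1) (WithTop.coe_le_coe.mpr le_top)).differentiable one_ne_zero) (l • x)).hasFDerivAt
  have hc : HasFDerivAt (fun z : E₂ => l • z) (l • ContinuousLinearMap.id ℝ E₂) x :=
    (hasFDerivAt_id x).const_smul l
  have hB2 : HasFDerivAt (fun y : E₂ => ((fderiv ℝ f (l • y) (l • ee i) : ℝ) : ℂ))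
      (Complex.ofRealCLM.comp (((ContinuousLinearMap.apply ℝ ℝ (l • ee i)).comp
        (fderiv ℝ (fderiv ℝ f) (l • x))).comp (l • ContinuousLinearMap.id ℝ E₂))) x := by
    have h1 : HasFDerivAt (fun z : E₂ => fderiv ℝ f z (l • ee i))
        ((ContinuousLinearMap.apply ℝ ℝ (l • ee i)).comp (fderiv ℝ (fderiv ℝ f) (l • x)))
        (l • x) := (ContinuousLinearMap.apply ℝ ℝ (l • ee i)).hasFDerivAt.comp (l • x) hdf
    exact Complex.ofRealCLM.hasFDerivAt.comp x (h1.comp x hc)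
  have h := ((exp_part_hasFDerivAt a x).mul (hB1.add hB2)).fderiv
  simp only [Pi.mul_def, Pi.add_def] at h
  rw [h]
  simp only [ContinuousLinearMap.smul_apply, ContinuousLinearMap.comp_apply,
    ContinuousLinearMap.add_apply, smul_eq_mul, ContinuousLinearMap.coe_smul',
    Pi.smul_apply, ContinuousLinearMap.coe_id', id_eq, ContinuousLinearMap.apply_apply,
    innerSL_apply_apply, Complex.ofRealCLM_apply, _root_.map_smul,
    smul_eq_mul, nsmul_eq_mul]
  rw [inner_ee]
  have hpe : (EuclideanSpace.proj (𝕜 := ℝ) i) (ee i) = 1 := by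
    simp [ee, PiLp.proj_apply, EuclideanSpace.single_apply]
  rw [hpe]
  push_cast
  ring

lemma fderiv_swap {g : E₂ → ℂ} (hg : ContDiff ℝ (⊤ : ℕ∞) g) (x u v : E₂) :
    fderiv ℝ (fderiv ℝ g) x u v = fderiv ℝ (fun y => fderiv ℝ g y v) x u := by
  have hgd : HasFDerivAt (fderiv ℝ g) (fderiv ℝ (fderiv ℝ g) x) x :=
    (((hg.fderiv_right (m := 1) (WithTop.coe_le_coe.mpr le_top)).differentiable one_ne_zero) x).hasFDerivAt
  have h := ((ContinuousLinearMap.apply ℝ ℂ v).hasFDerivAt.comp x hgd).fderiv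
  have he : (fun y => fderiv ℝ g y v) = (ContinuousLinearMap.apply ℝ ℂ v) ∘ (fderiv ℝ g) := rfl
  rw [he, h]
  simp

lemma lap_gfun {f : E₂ → ℝ} (hf : ContDiff ℝ (⊤ : ℕ∞) f) (a : ℂ) (l : ℝ) (x : E₂) :
    ∑ i : Fin 2, iteratedFDeriv ℝ 2 (gfun f a l) x ![ee i, ee i]
      = cexp (a * ((‖x‖^2 : ℝ) : ℂ)) *
        ((4 * a^2 * ((‖x‖^2 : ℝ) : ℂ) + 4 * a) * ((f (l • x) : ℝ) : ℂ)
          + 4 * a * (l : ℂ) * ((fderiv ℝ f (l • x) x : ℝ) : ℂ)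
          + (l : ℂ)^2 * ∑ i : Fin 2,
              ((fderiv ℝ (fderiv ℝ f) (l • x) (ee i) (ee i) : ℝ) : ℂ)) := by
  have hsw : ∀ i : Fin 2, iteratedFDeriv ℝ 2 (gfun f a l) x ![ee i, ee i]
      = fderiv ℝ (fun y => fderiv ℝ (gfun f a l) y (ee i)) x (ee i) := by
    intro i
    rw [iteratedFDeriv_two_apply]
    simp only [Matrix.cons_val_zero, Matrix.cons_val_one, Matrix.head_cons]
    exact fderiv_swap (gfun_smooth hf a l) x (ee i) (ee i)
  simp only [hsw, gfun_fderiv2_apply hf a l x]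
  have hgrad0 : ∀ L : E₂ →L[ℝ] ℝ, L x = x 0 * L (ee 0) + x 1 * L (ee 1) := by
    intro L
    conv_lhs => rw [decomp x]
    rw [map_add, _root_.map_smul, _root_.map_smul]
    simp [smul_eq_mul]
  have hgrad := hgrad0 (fderiv ℝ f (l • x))
  rw [Fin.sum_univ_two, Fin.sum_univ_two, hgrad, normsq x]
  push_cast
  ring

lemma master {f : E₂ → ℝ} (hf : ContDiff ℝ (⊤ : ℕ∞) f) (c t : ℝ) (ht : t < 1) (x : E₂) :
    (c : ℂ) * I * deriv (fun τ => vfun f c τ x) t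
      + ∑ i : Fin 2, iteratedFDeriv ℝ 2 (vfun f c t) x ![ee i, ee i]
    = (((1 - t)⁻¹ : ℝ) : ℂ)^3
      * cexp (-((c : ℂ) * I * ((‖x‖^2 : ℝ) : ℂ)) / (4 * (((1 - t) : ℝ) : ℂ)))
      * cexp ((c : ℂ) * I * (t : ℂ) / (((1 - t) : ℝ) : ℂ))
      * ((∑ i : Fin 2, ((fderiv ℝ (fderiv ℝ f) ((1 - t)⁻¹ • x) (ee i) (ee i) : ℝ) : ℂ))
          - (c : ℂ)^2 * ((f ((1 - t)⁻¹ • x) : ℝ) : ℂ)) := by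
  have hs : (1 : ℝ) - t ≠ 0 := ne_of_gt (by linarith)
  have hsC : (((1 - t) : ℝ) : ℂ) ≠ 0 := by exact_mod_cast hs
  have hr1 : HasDerivAt (fun τ : ℝ => (1 - τ)⁻¹) (((1 - t)^2)⁻¹) t := by
    have h0 : HasDerivAt (fun τ : ℝ => 1 - τ) (-1) t := (hasDerivAt_id t).const_sub 1
    have h1 := h0.inv hs
    rw [neg_neg, one_div] at h1
    exact h1
  have hc1 : HasDerivAt (fun τ : ℝ => ((((1 - τ)⁻¹ : ℝ)) : ℂ)) (((((1 - t)^2)⁻¹ : ℝ)) : ℂ) t :=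
    hr1.ofReal_comp
  have hc2 : HasDerivAt
      (fun τ : ℝ => cexp (-((c : ℂ) * I * ((‖x‖^2 : ℝ) : ℂ)) / (4 * (((1 - τ) : ℝ) : ℂ))))
      (cexp (-((c : ℂ) * I * ((‖x‖^2 : ℝ) : ℂ)) / (4 * (((1 - t) : ℝ) : ℂ)))
        * ((-((c : ℂ) * I * ((‖x‖^2 : ℝ) : ℂ)) / 4) * ((((1 - t)^2)⁻¹ : ℝ) : ℂ))) t := by
    have heq : (fun τ : ℝ => cexp (-((c : ℂ) * I * ((‖x‖^2 : ℝ) : ℂ)) / (4 * (((1 - τ) : ℝ) : ℂ))))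
        = fun τ : ℝ => cexp ((-((c : ℂ) * I * ((‖x‖^2 : ℝ) : ℂ)) / 4) * ((((1 - τ)⁻¹ : ℝ)) : ℂ)) := by
      funext τ
      rw [show -((c : ℂ) * I * ((‖x‖^2 : ℝ) : ℂ)) / (4 * (((1 - τ) : ℝ) : ℂ))
          = (-((c : ℂ) * I * ((‖x‖^2 : ℝ) : ℂ)) / 4) * ((((1 - τ)⁻¹ : ℝ)) : ℂ) from by
        push_cast; simp only [div_eq_mul_inv, mul_inv]; ring]
    rw [heq]
    have h := (hc1.const_mul (-((c : ℂ) * I * ((‖x‖^2 : ℝ) : ℂ)) / 4)).cexp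
    rw [show (-((c : ℂ) * I * ((‖x‖^2 : ℝ) : ℂ)) / 4) * ((((1 - t)⁻¹ : ℝ)) : ℂ)
        = -((c : ℂ) * I * ((‖x‖^2 : ℝ) : ℂ)) / (4 * (((1 - t) : ℝ) : ℂ)) from by
      push_cast; simp only [div_eq_mul_inv, mul_inv]; ring] at h
    exact h
  have hc3 : HasDerivAt
      (fun τ : ℝ => cexp ((c : ℂ) * I * (τ : ℂ) / (((1 - τ) : ℝ) : ℂ)))
      (cexp ((c : ℂ) * I * (t : ℂ) / (((1 - t) : ℝ) : ℂ))
        * ((c : ℂ) * I * ((((1 - t)^2)⁻¹ : ℝ) : ℂ))) t := by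
    have hr3 : HasDerivAt (fun τ : ℝ => τ * (1 - τ)⁻¹)
        (1 * (1 - t)⁻¹ + t * ((1 - t)^2)⁻¹) t := (hasDerivAt_id t).mul hr1
    have heq : (fun τ : ℝ => cexp ((c : ℂ) * I * (τ : ℂ) / (((1 - τ) : ℝ) : ℂ)))
        = fun τ : ℝ => cexp (((c : ℂ) * I) * (((τ * (1 - τ)⁻¹ : ℝ)) : ℂ)) := by
      funext τ
      rw [show (c : ℂ) * I * (τ : ℂ) / (((1 - τ) : ℝ) : ℂ)
          = ((c : ℂ) * I) * (((τ * (1 - τ)⁻¹ : ℝ)) : ℂ) from by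
        push_cast; simp only [div_eq_mul_inv, mul_inv]; ring]
    rw [heq]
    have hval : 1 * (1 - t)⁻¹ + t * ((1 - t)^2)⁻¹ = ((1 - t)^2)⁻¹ := by
      field_simp
      ring
    rw [hval] at hr3
    have h := (hr3.ofReal_comp.const_mul ((c : ℂ) * I)).cexp
    rw [show ((c : ℂ) * I) * (((t * (1 - t)⁻¹ : ℝ)) : ℂ)
        = (c : ℂ) * I * (t : ℂ) / (((1 - t) : ℝ) : ℂ) from by
      push_cast; simp only [div_eq_mul_inv, mul_inv]; ring] at h
    exact h
  have hc4 : HasDerivAt (fun τ : ℝ => ((f ((1 - τ)⁻¹ • x) : ℝ) : ℂ))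
      (((((1 - t)^2)⁻¹ * fderiv ℝ f ((1 - t)⁻¹ • x) x : ℝ)) : ℂ) t := by
    have hγ : HasDerivAt (fun τ : ℝ => (1 - τ)⁻¹ • x) ((((1 - t)^2)⁻¹ : ℝ) • x) t :=
      hr1.smul_const x
    have h := ((hf.differentiable (by simp) ((1 - t)⁻¹ • x)).hasFDerivAt).comp_hasDerivAt t hγ
    have h2 : fderiv ℝ f ((1 - t)⁻¹ • x) ((((1 - t)^2)⁻¹ : ℝ) • x)
        = ((1 - t)^2)⁻¹ * fderiv ℝ f ((1 - t)⁻¹ • x) x := by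
      rw [_root_.map_smul]; simp [smul_eq_mul]
    rw [← h2]
    exact h.ofReal_comp
  have hder := (((hc1.mul hc2).mul hc3).mul hc4).deriv
  have hfeq : (fun τ => vfun f c τ x)
      = fun τ : ℝ => ((((1 - τ)⁻¹ : ℝ)) : ℂ)
          * cexp (-((c : ℂ) * I * ((‖x‖^2 : ℝ) : ℂ)) / (4 * (((1 - τ) : ℝ) : ℂ)))
          * cexp ((c : ℂ) * I * (τ : ℂ) / (((1 - τ) : ℝ) : ℂ))
          * ((f ((1 - τ)⁻¹ • x) : ℝ) : ℂ) := rfl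
  simp only [Pi.mul_def] at hder
  rw [hfeq, hder]
  have hfun2 : vfun f c t = (((((1 - t)⁻¹ : ℝ)) : ℂ)
      * cexp ((c : ℂ) * I * (t : ℂ) / (((1 - t) : ℝ) : ℂ)))
      • gfun f (-((c : ℂ) * I) / (4 * (((1 - t) : ℝ) : ℂ))) (1 - t)⁻¹ := by
    funext y
    rw [Pi.smul_apply, smul_eq_mul, gfun]
    rw [show (-((c : ℂ) * I) / (4 * (((1 - t) : ℝ) : ℂ))) * ((‖y‖^2 : ℝ) : ℂ)
        = -((c : ℂ) * I * ((‖y‖^2 : ℝ) : ℂ)) / (4 * (((1 - t) : ℝ) : ℂ)) from by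
      simp only [div_eq_mul_inv, mul_inv]; ring]
    rw [vfun]
    ring
  rw [hfun2]
  have hsm : ∀ i : Fin 2, iteratedFDeriv ℝ 2
        ((((((1 - t)⁻¹ : ℝ)) : ℂ) * cexp ((c : ℂ) * I * (t : ℂ) / (((1 - t) : ℝ) : ℂ)))
          • gfun f (-((c : ℂ) * I) / (4 * (((1 - t) : ℝ) : ℂ))) (1 - t)⁻¹) x ![ee i, ee i]
      = ((((1 - t)⁻¹ : ℝ)) : ℂ) * cexp ((c : ℂ) * I * (t : ℂ) / (((1 - t) : ℝ) : ℂ))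
        * iteratedFDeriv ℝ 2
            (gfun f (-((c : ℂ) * I) / (4 * (((1 - t) : ℝ) : ℂ))) (1 - t)⁻¹) x ![ee i, ee i] := by
    intro i
    rw [iteratedFDeriv_const_smul_apply
      ((gfun_smooth hf (-((c : ℂ) * I) / (4 * (((1 - t) : ℝ) : ℂ))) (1 - t)⁻¹).of_le (WithTop.coe_le_coe.mpr le_top)).contDiffAt]
    simp
  simp only [hsm]
  rw [← Finset.mul_sum, lap_gfun hf]
  rw [show (-((c : ℂ) * I) / (4 * (((1 - t) : ℝ) : ℂ))) * ((‖x‖^2 : ℝ) : ℂ)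
      = -((c : ℂ) * I * ((‖x‖^2 : ℝ) : ℂ)) / (4 * (((1 - t) : ℝ) : ℂ)) from by
    simp only [div_eq_mul_inv, mul_inv]; ring]
  rw [show (-((c : ℂ) * I) / (4 * (((1 - t) : ℝ) : ℂ)))
      = (-((c : ℂ) * I) / 4) * ((((1 - t)⁻¹ : ℝ)) : ℂ) from by
    push_cast; simp only [div_eq_mul_inv, mul_inv]; ring]
  rw [show (((1 - t)^2)⁻¹ : ℝ) = (1 - t)⁻¹ * (1 - t)⁻¹ from by rw [sq, mul_inv]]
  push_cast
  ring_nf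
  simp only [Complex.I_sq]
  ring_nf

lemma vfun_norm_sq (f : E₂ → ℝ) (c t : ℝ) (x : E₂) :
    ‖vfun f c t x‖^2 = ((1 - t)⁻¹)^2 * (f ((1 - t)⁻¹ • x))^2 := by
  simp only [vfun]
  rw [show -((c : ℂ) * I * ((‖x‖^2 : ℝ) : ℂ)) / (4 * (((1 - t) : ℝ) : ℂ))
      = ((-(c * ‖x‖^2 / (4 * (1 - t))) : ℝ) : ℂ) * I from by
    push_cast; simp only [div_eq_mul_inv, mul_inv]; ring]
  rw [show (c : ℂ) * I * (t : ℂ) / (((1 - t) : ℝ) : ℂ)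
      = (((c * t / (1 - t)) : ℝ) : ℂ) * I from by
    push_cast; simp only [div_eq_mul_inv, mul_inv]; ring]
  rw [norm_mul, norm_mul, norm_mul, Complex.norm_exp_ofReal_mul_I,
    Complex.norm_exp_ofReal_mul_I]
  simp [Complex.norm_real, mul_pow, sq_abs]
  left
  rw [show ((1:ℂ) - (t:ℂ)) = (((1 - t : ℝ)) : ℂ) from by push_cast; ring,
    Complex.sq_norm, Complex.normSq_ofReal]
  ring

end PCAux

open Complex

/-- explicit blow-up by pseudo-conformal transformation for n = 2,
σ = 3, μ = 9: the pseudo-conformal transform of the standing wave built on a real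
solution (P,Q) of the stationary system (ω = 0) solves the gauge-transformed evolution
system for t < 1 and has the same mass at time 0. -/
theorem pseudoconformal_blowup
    (P Q : EuclideanSpace ℝ (Fin 2) → ℝ)
    (hPreg : ContDiff ℝ (⊤ : ℕ∞) P) (hQreg : ContDiff ℝ (⊤ : ℕ∞) Q)
    (hP2 : MemLp P 2 (volume : Measure (EuclideanSpace ℝ (Fin 2))))
    (hQ2 : MemLp Q 2 (volume : Measure (EuclideanSpace ℝ (Fin 2))))
    (hPDE1 : ∀ x, (∑ i : Fin 2, iteratedFDeriv ℝ 2 P x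
        ![EuclideanSpace.single i 1, EuclideanSpace.single i 1])
        - P x + ((P x)^2 / 9 + 2 * (Q x)^2) * P x + (P x)^2 * Q x / 3 = 0)
    (hPDE2 : ∀ x, (∑ i : Fin 2, iteratedFDeriv ℝ 2 Q x
        ![EuclideanSpace.single i 1, EuclideanSpace.single i 1])
        - 9 * Q x + (9 * (Q x)^2 + 2 * (P x)^2) * Q x + (P x)^3 / 9 = 0)
    (uh wh : ℝ → EuclideanSpace ℝ (Fin 2) → ℂ)
    (huh : ∀ t x, uh t x = (((1 - t)⁻¹ : ℝ) : ℂ)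
        * Complex.exp (-(Complex.I * ((‖x‖^2 : ℝ) : ℂ)) / (4 * (((1 - t) : ℝ) : ℂ)))
        * Complex.exp (Complex.I * (t : ℂ) / (((1 - t) : ℝ) : ℂ))
        * ((P ((1 - t)⁻¹ • x) : ℝ) : ℂ))
    (hwh : ∀ t x, wh t x = (((1 - t)⁻¹ : ℝ) : ℂ)
        * Complex.exp (-(3 * Complex.I * ((‖x‖^2 : ℝ) : ℂ)) / (4 * (((1 - t) : ℝ) : ℂ)))
        * Complex.exp (3 * Complex.I * (t : ℂ) / (((1 - t) : ℝ) : ℂ))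
        * ((Q ((1 - t)⁻¹ • x) : ℝ) : ℂ)) :
    (∀ t : ℝ, t < 1 → ∀ x,
      Complex.I * deriv (fun s => uh s x) t + lapC (uh t) x
        + (((‖uh t x‖^2 / 9 + 2 * ‖wh t x‖^2 : ℝ)) : ℂ) * uh t x
        + (1/3) * (starRingEnd ℂ (uh t x))^2 * wh t x = 0 ∧
      3 * Complex.I * deriv (fun s => wh s x) t + lapC (wh t) x
        + (((9 * ‖wh t x‖^2 + 2 * ‖uh t x‖^2 : ℝ)) : ℂ) * wh t x
        + (1/9) * (uh t x)^3 = 0) ∧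
    ∫ x, (‖uh 0 x‖^2 + 9 * ‖wh 0 x‖^2) = ∫ x, ((P x)^2 + 9 * (Q x)^2) := by
  have huf : uh = fun τ => vfun P 1 τ := by
    funext τ y
    rw [huh]
    simp only [vfun]
    norm_num
  have hwf : wh = fun τ => vfun Q 3 τ := by
    funext τ y
    rw [hwh]
    simp only [vfun]
    norm_num
  constructor
  · intro t ht x
    have hs : (1 : ℝ) - t ≠ 0 := ne_of_gt (by linarith)
    -- PDE identities at the rescaled point, in ℂ
    have hit : ∀ (f : EuclideanSpace ℝ (Fin 2) → ℝ) (i : Fin 2),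
        iteratedFDeriv ℝ 2 f ((1 - t)⁻¹ • x)
          ![EuclideanSpace.single i 1, EuclideanSpace.single i 1]
          = fderiv ℝ (fderiv ℝ f) ((1 - t)⁻¹ • x) (ee i) (ee i) := by
      intro f i
      rw [iteratedFDeriv_two_apply]
      simp [ee]
    have hsum1 : (∑ i : Fin 2,
          ((fderiv ℝ (fderiv ℝ P) ((1 - t)⁻¹ • x) (ee i) (ee i) : ℝ) : ℂ))
        = ((P ((1 - t)⁻¹ • x) : ℝ) : ℂ)
          - (((P ((1 - t)⁻¹ • x) : ℝ) : ℂ)^2/9 + 2*((Q ((1 - t)⁻¹ • x) : ℝ) : ℂ)^2)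
              * ((P ((1 - t)⁻¹ • x) : ℝ) : ℂ)
          - ((P ((1 - t)⁻¹ • x) : ℝ) : ℂ)^2 * ((Q ((1 - t)⁻¹ • x) : ℝ) : ℂ)/3 := by
      have h0 := hPDE1 ((1 - t)⁻¹ • x)
      simp only [hit P] at h0
      rw [← Complex.ofReal_sum]
      rw [show (∑ i : Fin 2, fderiv ℝ (fderiv ℝ P) ((1 - t)⁻¹ • x) (ee i) (ee i))
          = P ((1 - t)⁻¹ • x)
            - ((P ((1 - t)⁻¹ • x))^2/9 + 2*(Q ((1 - t)⁻¹ • x))^2) * P ((1 - t)⁻¹ • x)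
            - (P ((1 - t)⁻¹ • x))^2 * Q ((1 - t)⁻¹ • x)/3 from by linear_combination h0]
      push_cast
      ring
    have hsum2 : (∑ i : Fin 2,
          ((fderiv ℝ (fderiv ℝ Q) ((1 - t)⁻¹ • x) (ee i) (ee i) : ℝ) : ℂ))
        = 9 * ((Q ((1 - t)⁻¹ • x) : ℝ) : ℂ)
          - (9 * ((Q ((1 - t)⁻¹ • x) : ℝ) : ℂ)^2 + 2*((P ((1 - t)⁻¹ • x) : ℝ) : ℂ)^2)
              * ((Q ((1 - t)⁻¹ • x) : ℝ) : ℂ)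
          - ((P ((1 - t)⁻¹ • x) : ℝ) : ℂ)^3/9 := by
      have h0 := hPDE2 ((1 - t)⁻¹ • x)
      simp only [hit Q] at h0
      rw [← Complex.ofReal_sum]
      rw [show (∑ i : Fin 2, fderiv ℝ (fderiv ℝ Q) ((1 - t)⁻¹ • x) (ee i) (ee i))
          = 9 * Q ((1 - t)⁻¹ • x)
            - (9 * (Q ((1 - t)⁻¹ • x))^2 + 2*(P ((1 - t)⁻¹ • x))^2) * Q ((1 - t)⁻¹ • x)
            - (P ((1 - t)⁻¹ • x))^3/9 from by linear_combination h0]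
      push_cast
      ring
    -- explicit values
    have hv1 : vfun P 1 t x = (((1 - t)⁻¹ : ℝ) : ℂ)
        * cexp (-(I * ((‖x‖^2 : ℝ) : ℂ)) / (4 * (((1 - t) : ℝ) : ℂ)))
        * cexp (I * (t : ℂ) / (((1 - t) : ℝ) : ℂ))
        * ((P ((1 - t)⁻¹ • x) : ℝ) : ℂ) := by
      simp only [vfun]; norm_num
    have hv2 : vfun Q 3 t x = (((1 - t)⁻¹ : ℝ) : ℂ)
        * cexp (-(3 * I * ((‖x‖^2 : ℝ) : ℂ)) / (4 * (((1 - t) : ℝ) : ℂ)))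
        * cexp (3 * I * (t : ℂ) / (((1 - t) : ℝ) : ℂ))
        * ((Q ((1 - t)⁻¹ • x) : ℝ) : ℂ) := by
      simp only [vfun]; norm_num
    -- exponential identities
    have he1 : (starRingEnd ℂ (cexp (-(I * ((‖x‖^2 : ℝ) : ℂ)) / (4 * (((1 - t) : ℝ) : ℂ)))))^2
        * cexp (-(3 * I * ((‖x‖^2 : ℝ) : ℂ)) / (4 * (((1 - t) : ℝ) : ℂ)))
        = cexp (-(I * ((‖x‖^2 : ℝ) : ℂ)) / (4 * (((1 - t) : ℝ) : ℂ))) := by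
      rw [← Complex.exp_conj, sq, ← Complex.exp_add, ← Complex.exp_add]
      congr 1
      simp only [map_div₀, map_neg, map_mul, Complex.conj_I, Complex.conj_ofReal, map_ofNat]
      ring
    have he2 : (starRingEnd ℂ (cexp (I * (t : ℂ) / (((1 - t) : ℝ) : ℂ))))^2
        * cexp (3 * I * (t : ℂ) / (((1 - t) : ℝ) : ℂ))
        = cexp (I * (t : ℂ) / (((1 - t) : ℝ) : ℂ)) := by
      rw [← Complex.exp_conj, sq, ← Complex.exp_add, ← Complex.exp_add]
      congr 1
      simp only [map_div₀, map_neg, map_mul, Complex.conj_I, Complex.conj_ofReal, map_ofNat]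
      ring
    have he3 : (cexp (-(I * ((‖x‖^2 : ℝ) : ℂ)) / (4 * (((1 - t) : ℝ) : ℂ))))^3
        = cexp (-(3 * I * ((‖x‖^2 : ℝ) : ℂ)) / (4 * (((1 - t) : ℝ) : ℂ))) := by
      rw [show (cexp (-(I * ((‖x‖^2 : ℝ) : ℂ)) / (4 * (((1 - t) : ℝ) : ℂ))))^3
          = cexp (-(I * ((‖x‖^2 : ℝ) : ℂ)) / (4 * (((1 - t) : ℝ) : ℂ)))
            * cexp (-(I * ((‖x‖^2 : ℝ) : ℂ)) / (4 * (((1 - t) : ℝ) : ℂ)))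
            * cexp (-(I * ((‖x‖^2 : ℝ) : ℂ)) / (4 * (((1 - t) : ℝ) : ℂ))) from by ring,
        ← Complex.exp_add, ← Complex.exp_add]
      congr 1
      ring
    have he4 : (cexp (I * (t : ℂ) / (((1 - t) : ℝ) : ℂ)))^3
        = cexp (3 * I * (t : ℂ) / (((1 - t) : ℝ) : ℂ)) := by
      rw [show (cexp (I * (t : ℂ) / (((1 - t) : ℝ) : ℂ)))^3
          = cexp (I * (t : ℂ) / (((1 - t) : ℝ) : ℂ))
            * cexp (I * (t : ℂ) / (((1 - t) : ℝ) : ℂ))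
            * cexp (I * (t : ℂ) / (((1 - t) : ℝ) : ℂ)) from by ring,
        ← Complex.exp_add, ← Complex.exp_add]
      congr 1
      ring
    -- conj product value
    have hd : (starRingEnd ℂ (vfun P 1 t x))^2 * vfun Q 3 t x
        = (((1 - t)⁻¹ : ℝ) : ℂ)^3
          * cexp (-(I * ((‖x‖^2 : ℝ) : ℂ)) / (4 * (((1 - t) : ℝ) : ℂ)))
          * cexp (I * (t : ℂ) / (((1 - t) : ℝ) : ℂ))
          * (((P ((1 - t)⁻¹ • x) : ℝ) : ℂ)^2 * ((Q ((1 - t)⁻¹ • x) : ℝ) : ℂ)) := by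
      rw [hv1, hv2]
      simp only [map_mul, Complex.conj_ofReal]
      rw [show ((((1 - t)⁻¹ : ℝ) : ℂ)
            * (starRingEnd ℂ (cexp (-(I * ((‖x‖^2 : ℝ) : ℂ)) / (4 * (((1 - t) : ℝ) : ℂ)))))
            * (starRingEnd ℂ (cexp (I * (t : ℂ) / (((1 - t) : ℝ) : ℂ))))
            * ((P ((1 - t)⁻¹ • x) : ℝ) : ℂ))^2
          * ((((1 - t)⁻¹ : ℝ) : ℂ)
            * cexp (-(3 * I * ((‖x‖^2 : ℝ) : ℂ)) / (4 * (((1 - t) : ℝ) : ℂ)))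
            * cexp (3 * I * (t : ℂ) / (((1 - t) : ℝ) : ℂ))
            * ((Q ((1 - t)⁻¹ • x) : ℝ) : ℂ))
          = (((1 - t)⁻¹ : ℝ) : ℂ)^3
            * (((starRingEnd ℂ (cexp (-(I * ((‖x‖^2 : ℝ) : ℂ)) / (4 * (((1 - t) : ℝ) : ℂ)))))^2
                * cexp (-(3 * I * ((‖x‖^2 : ℝ) : ℂ)) / (4 * (((1 - t) : ℝ) : ℂ))))
              * ((starRingEnd ℂ (cexp (I * (t : ℂ) / (((1 - t) : ℝ) : ℂ))))^2
                * cexp (3 * I * (t : ℂ) / (((1 - t) : ℝ) : ℂ))))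
            * (((P ((1 - t)⁻¹ • x) : ℝ) : ℂ)^2 * ((Q ((1 - t)⁻¹ • x) : ℝ) : ℂ)) from by ring,
        he1, he2]
      ring
    -- cube value
    have hu3 : (vfun P 1 t x)^3
        = (((1 - t)⁻¹ : ℝ) : ℂ)^3
          * cexp (-(3 * I * ((‖x‖^2 : ℝ) : ℂ)) / (4 * (((1 - t) : ℝ) : ℂ)))
          * cexp (3 * I * (t : ℂ) / (((1 - t) : ℝ) : ℂ))
          * ((P ((1 - t)⁻¹ • x) : ℝ) : ℂ)^3 := by
      rw [hv1]
      rw [show ((((1 - t)⁻¹ : ℝ) : ℂ)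
            * cexp (-(I * ((‖x‖^2 : ℝ) : ℂ)) / (4 * (((1 - t) : ℝ) : ℂ)))
            * cexp (I * (t : ℂ) / (((1 - t) : ℝ) : ℂ))
            * ((P ((1 - t)⁻¹ • x) : ℝ) : ℂ))^3
          = (((1 - t)⁻¹ : ℝ) : ℂ)^3
            * ((cexp (-(I * ((‖x‖^2 : ℝ) : ℂ)) / (4 * (((1 - t) : ℝ) : ℂ))))^3
              * (cexp (I * (t : ℂ) / (((1 - t) : ℝ) : ℂ)))^3)
            * ((P ((1 - t)⁻¹ • x) : ℝ) : ℂ)^3 from by ring, he3, he4]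
      ring
    constructor
    · -- first equation
      simp only [huf, hwf, lapC]
      have hm1 := master hPreg 1 t ht x
      simp only [Complex.ofReal_one, one_mul, one_pow] at hm1
      simp only [ee] at hm1
      rw [hm1]
      rw [vfun_norm_sq P 1 t x, vfun_norm_sq Q 3 t x]
      simp only [ee] at hsum1
      rw [hsum1]
      rw [mul_assoc ((1:ℂ)/3), hd, hv1]
      push_cast
      ring
    · -- second equation
      simp only [huf, hwf, lapC]
      have hm2 := master hQreg 3 t ht x
      simp only [Complex.ofReal_ofNat] at hm2
      simp only [ee] at hm2
      rw [hm2]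
      rw [vfun_norm_sq P 1 t x, vfun_norm_sq Q 3 t x]
      simp only [ee] at hsum2
      rw [hsum2]
      rw [hu3, hv2]
      push_cast
      ring
  · -- mass at time 0
    have hmass : (fun y : EuclideanSpace ℝ (Fin 2) => ‖uh 0 y‖^2 + 9 * ‖wh 0 y‖^2)
        = fun y => (P y)^2 + 9 * (Q y)^2 := by
      funext y
      simp only [huf, hwf]
      rw [vfun_norm_sq, vfun_norm_sq]
      norm_num
    rw [hmass]
end
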